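/- Let X = {x ∈ ℝ^n : H_x x ≤ h_x} be a nonempty polyhedron and Y = {y ∈ ℝ^m : H_y y ≤ h_y} a polyhedron. Given γ ∈ ℝ^m and Γ ∈ ℝ^{m×n}, the affine image γ + Γ·X is contained in Y if and only if there exists a matrix Λ with nonnegative entries such that Λ H_x = H_y Γ and Λ h_x ≤ h_y − H_y γ (componentwise). -/

import Mathlib

/-!
If `Λ ≥ 0` and `Λ Hx = Hy Γ`, then for `x ∈ X` we get
`Hy (γ + Γ x) = Hy γ + Λ (Hx x) ≤ Hy γ + Λ hx ≤ hy`. Conversely, row `i` of the containment says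
that the linear functional `x ↦ (Hy Γ)ᵢ ⬝ x` is bounded above by `hyᵢ - (Hy γ)ᵢ` on the nonempty
polyhedron `X`, and the inhomogeneous Farkas lemma produces the nonnegative row `Λᵢ`.

Farkas' lemma comes from separating a point from the cone spanned by the rows of a matrix, which
requires that cone to be closed. Finitely generated cones are closed: with linearly independent
generators the cone is the image of the closed orthant under a closed embedding, and otherwise
every point of the cone already lies in a cone spanned by one generator fewer.
-/

open Matrix

section ConicCombination

variable {ι E : Type*} [Fintype ι] [AddCommGroup E] [Module ℝ E] {v : ι → E}

theorem exists_linearCombination_eq_zero_pos_of_not_linearIndependent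
    (hv : ¬LinearIndependent ℝ v) :
    ∃ c : ι → ℝ, Fintype.linearCombination ℝ v c = 0 ∧ ∃ i, 0 < c i := by
  obtain ⟨g, hg, i, hgi⟩ := Fintype.not_linearIndependent_iff.mp hv
  rcases hgi.lt_or_gt with hneg | hpos
  · exact ⟨-g, by simp [Fintype.linearCombination_apply, hg], i, neg_pos.mpr hneg⟩
  · exact ⟨g, hg, i, hpos⟩

/-- Move along a positive linear relation `c` until the first coefficient hits zero. -/
theorem exists_nonneg_eq_zero_linearCombination_eq_of_not_linearIndependent
    (hv : ¬LinearIndependent ℝ v) {l : ι → ℝ} (hl : 0 ≤ l) :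
    ∃ l' : ι → ℝ, 0 ≤ l' ∧ (∃ i, l' i = 0) ∧
      Fintype.linearCombination ℝ v l' = Fintype.linearCombination ℝ v l := by
  classical
  obtain ⟨c, hc, hcpos⟩ := exists_linearCombination_eq_zero_pos_of_not_linearIndependent hv
  obtain ⟨j, hj, hmin⟩ := (Finset.univ.filter fun i => 0 < c i).exists_min_image
    (fun i => l i / c i) (by simpa [Finset.filter_nonempty_iff] using hcpos)
  rw [Finset.mem_filter_univ] at hj
  set t := l j / c j
  have ht : 0 ≤ t := div_nonneg (hl j) hj.le
  refine ⟨l - t • c, fun i => ?_, ⟨j, by simp [t, hj.ne']⟩, by simp [hc]⟩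
  rcases lt_or_ge 0 (c i) with hci | hci
  · have := hmin i (by simpa using hci)
    rw [le_div_iff₀ hci] at this
    simpa using this
  · simpa using (mul_nonpos_of_nonneg_of_nonpos ht hci).trans (hl i)

theorem image_linearCombination_Ici_eq_iUnion_of_not_linearIndependent [DecidableEq ι]
    (hv : ¬LinearIndependent ℝ v) :
    Fintype.linearCombination ℝ v '' Set.Ici 0 =
      ⋃ i, Fintype.linearCombination ℝ (fun j : {j // j ≠ i} => v j.1) '' Set.Ici 0 := by
  ext x
  simp only [Set.mem_iUnion, Set.mem_image, Set.mem_Ici]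
  constructor
  · rintro ⟨l, hl, rfl⟩
    obtain ⟨l', hl', ⟨i, hi⟩, hsum⟩ :=
      exists_nonneg_eq_zero_linearCombination_eq_of_not_linearIndependent hv hl
    refine ⟨i, fun j => l' j, fun j => hl' j, ?_⟩
    rw [← hsum, Fintype.linearCombination_apply, Fintype.linearCombination_apply,
      Fintype.sum_eq_add_sum_subtype_ne _ i, hi, zero_smul, zero_add]
  · rintro ⟨i, l, hl, rfl⟩
    refine ⟨fun j => if h : j = i then 0 else l ⟨j, h⟩, fun j => ?_, ?_⟩
    · dsimp only
      split_ifs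
      exacts [le_rfl, hl _]
    · have hne (j : {j // j ≠ i}) : j.1 ≠ i := j.2
      simp [Fintype.linearCombination_apply, Fintype.sum_eq_add_sum_subtype_ne _ i, hne]

variable [TopologicalSpace E] [IsTopologicalAddGroup E] [ContinuousSMul ℝ E] [T2Space E]

theorem isClosed_image_linearCombination_Ici (v : ι → E) :
    IsClosed (Fintype.linearCombination ℝ v '' Set.Ici 0) := by
  classical
  induction hcard : Fintype.card ι using Nat.strong_induction_on generalizing ι with
  | _ k ih =>
  by_cases hv : LinearIndependent ℝ v
  · have hker : LinearMap.ker (Fintype.linearCombination ℝ v) = ⊥ :=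
      LinearMap.ker_eq_bot.mpr hv.fintypeLinearCombination_injective
    exact (LinearMap.isClosedEmbedding_of_injective hker).isClosedMap _ isClosed_Ici
  · rw [image_linearCombination_Ici_eq_iUnion_of_not_linearIndependent hv]
    exact isClosed_iUnion_of_finite fun i =>
      ih _ (hcard ▸ Fintype.card_subtype_lt (p := (· ≠ i)) (not_not.mpr rfl)) _ rfl

end ConicCombination

namespace Matrix

variable {m n : Type*} [Fintype n]

theorem exists_dotProduct_eq_apply (f : (n → ℝ) →ₗ[ℝ] ℝ) :
    ∃ y : n → ℝ, ∀ u, f u = u ⬝ᵥ y := by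
  classical
  exact ⟨fun j => f fun k => if j = k then 1 else 0, fun u => by
    simp [dotProduct, LinearMap.pi_apply_eq_sum_univ f u]⟩

variable {A : Matrix m n ℝ} {b : m → ℝ} {c : n → ℝ} {d : ℝ}

theorem dotProduct_nonpos_of_mulVec_nonpos (hfeas : ∃ x, A *ᵥ x ≤ b)
    (h : ∀ x, A *ᵥ x ≤ b → c ⬝ᵥ x ≤ d) {z : n → ℝ} (hz : A *ᵥ z ≤ 0) : c ⬝ᵥ z ≤ 0 := by
  obtain ⟨x₀, hx₀⟩ := hfeas
  by_contra! hcz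
  set s := (d - c ⬝ᵥ x₀ + 1) / (c ⬝ᵥ z)
  have hs : 0 ≤ s := div_nonneg (by linarith [h x₀ hx₀]) hcz.le
  have hfar := h (x₀ + s • z) <| by
    rw [mulVec_add, mulVec_smul]
    exact add_le_of_le_of_nonpos hx₀ (smul_nonpos_of_nonneg_of_nonpos hs hz)
  rw [dotProduct_add, dotProduct_smul, smul_eq_mul, div_mul_cancel₀ _ hcz.ne'] at hfar
  linarith

theorem dotProduct_add_mul_nonneg_of_mulVec_add_smul_nonneg (hfeas : ∃ x, A *ᵥ x ≤ b)
    (h : ∀ x, A *ᵥ x ≤ b → c ⬝ᵥ x ≤ d) {z : n → ℝ} {t : ℝ} (ht : 0 ≤ t)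
    (hz : 0 ≤ A *ᵥ z + t • b) : 0 ≤ c ⬝ᵥ z + t * d := by
  rcases ht.eq_or_lt with rfl | ht
  · have hz' : A *ᵥ -z ≤ 0 := by simpa [mulVec_neg] using hz
    simpa using dotProduct_nonpos_of_mulVec_nonpos hfeas h hz'
  · have hx : A *ᵥ (-t⁻¹ • z) ≤ b := by
      rw [mulVec_smul, neg_smul, ← smul_neg, ← inv_smul_smul₀ ht.ne' b]
      exact smul_le_smul_of_nonneg_left (neg_le_iff_add_nonneg'.mpr hz) (inv_nonneg.mpr ht.le)
    have hcx := h _ hx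
    rw [dotProduct_smul, smul_eq_mul, neg_mul, neg_le, ← div_eq_inv_mul, le_div_iff₀ ht] at hcx
    linarith

variable [Fintype m]

/-- **Farkas' lemma**. -/
theorem exists_nonneg_vecMul_eq_of_forall_mulVec_nonneg
    (h : ∀ y, 0 ≤ A *ᵥ y → 0 ≤ c ⬝ᵥ y) : ∃ l, 0 ≤ l ∧ l ᵥ* A = c := by
  classical
  have hlc : ⇑(Fintype.linearCombination ℝ A) = (· ᵥ* A) :=
    funext fun l => (vecMul_eq_sum l A).symm
  let C : ProperCone ℝ (n → ℝ) :=
    ⟨(PointedCone.positive ℝ (m → ℝ)).map (Fintype.linearCombination ℝ A),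
      by simpa [PointedCone.coe_map] using isClosed_image_linearCombination_Ici A⟩
  have hmemC (u : n → ℝ) : u ∈ C ↔ ∃ l, 0 ≤ l ∧ l ᵥ* A = u := by
    simp [C, PointedCone.mem_map, hlc]
  by_contra hc
  obtain ⟨f, hfC, hfc⟩ := C.hyperplane_separation_point (x₀ := c) (by rwa [hmemC])
  obtain ⟨y, hy⟩ : ∃ y, ∀ u, f u = u ⬝ᵥ y := exists_dotProduct_eq_apply f.toLinearMap
  have hAy : 0 ≤ A *ᵥ y := fun i => by
    rw [Pi.zero_apply, mulVec, ← hy]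
    exact hfC (A i) ((hmemC _).mpr ⟨Pi.single i 1, Pi.single_nonneg.mpr zero_le_one,
      single_one_vecMul i A⟩)
  exact (h y hAy).not_gt (hy c ▸ hfc)

theorem exists_nonneg_vecMul_eq_dotProduct_le (hfeas : ∃ x, A *ᵥ x ≤ b)
    (h : ∀ x, A *ᵥ x ≤ b → c ⬝ᵥ x ≤ d) : ∃ l, 0 ≤ l ∧ l ᵥ* A = c ∧ l ⬝ᵥ b ≤ d := by
  -- Homogenize: `(c, d)` lies in the cone spanned by the rows `(Aᵢ, bᵢ)` and `(0, 1)`.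
  let M : Matrix (m ⊕ Unit) (n ⊕ Unit) ℝ := fromBlocks A (replicateCol Unit b) 0 1
  obtain ⟨l, hl, hlM⟩ :=
    exists_nonneg_vecMul_eq_of_forall_mulVec_nonneg (A := M) (c := Sum.elim c fun _ => d) <| by
      intro y hy
      obtain ⟨z, w, rfl⟩ : ∃ z w, y = Sum.elim z w :=
        ⟨y ∘ Sum.inl, y ∘ Sum.inr, (Sum.elim_comp_inl_inr y).symm⟩
      have hcol : replicateCol Unit b *ᵥ w = w () • b := by
        ext i
        simp [mulVec, dotProduct, mul_comm]
      simp only [M, fromBlocks_mulVec, Sum.elim_comp_inl, Sum.elim_comp_inr, zero_mulVec,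
        one_mulVec, zero_add, hcol, ← Sum.elim_zero_zero, Sum.elim_le_elim_iff] at hy
      rw [sumElim_dotProduct_sumElim]
      simpa [dotProduct, mul_comm d] using
        dotProduct_add_mul_nonneg_of_mulVec_add_smul_nonneg hfeas h (hy.2 ()) hy.1
  simp only [M, vecMul_fromBlocks, vecMul_zero, vecMul_one, add_zero,
    mulVec_replicateCol_eq_const] at hlM
  have hA : l ∘ Sum.inl ᵥ* A = c := funext fun j => congrFun hlM (Sum.inl j)
  have hb : l ∘ Sum.inl ⬝ᵥ b + l (Sum.inr ()) = d := congrFun hlM (Sum.inr ())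
  exact ⟨l ∘ Sum.inl, fun i => hl _, hA, by linarith [show 0 ≤ l (Sum.inr ()) from hl _]⟩

end Matrix

/-- Set-containment duality (Lemma 1): for nonempty polyhedron
`X = {x : Hx x ≤ hx}` and polyhedron `Y = {y : Hy y ≤ hy}`, the affine image
`γ + Γ·X` is contained in `Y` iff there is an entrywise nonnegative matrix `Λ`
with `Λ Hx = Hy Γ` and `Λ hx ≤ hy - Hy γ`. -/
theorem set_containment_duality
    (p q n m : ℕ)
    (Hx : Matrix (Fin p) (Fin n) ℝ) (hx : Fin p → ℝ)
    (Hy : Matrix (Fin q) (Fin m) ℝ) (hy : Fin q → ℝ)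
    (γ : Fin m → ℝ) (Γ : Matrix (Fin m) (Fin n) ℝ)
    (hXne : ∃ x : Fin n → ℝ, Hx.mulVec x ≤ hx) :
    ((fun x => γ + Γ.mulVec x) '' {x | Hx.mulVec x ≤ hx} ⊆ {y | Hy.mulVec y ≤ hy}) ↔
      ∃ Λ : Matrix (Fin q) (Fin p) ℝ,
        (∀ i j, 0 ≤ Λ i j) ∧ Λ * Hx = Hy * Γ ∧
          Λ.mulVec hx ≤ hy - Hy.mulVec γ := by
  constructor
  · intro hsub
    have hrow (i : Fin q) : ∃ l : Fin p → ℝ,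
        0 ≤ l ∧ l ᵥ* Hx = (Hy * Γ) i ∧ l ⬝ᵥ hx ≤ hy i - (Hy *ᵥ γ) i := by
      refine exists_nonneg_vecMul_eq_dotProduct_le hXne fun x hxX => ?_
      have hmem : Hy *ᵥ γ + (Hy * Γ) *ᵥ x ≤ hy := by
        simpa [mulVec_add, mulVec_mulVec] using hsub ⟨x, hxX, rfl⟩
      exact le_sub_iff_add_le'.mpr (hmem i)
    choose Λ hΛ0 hΛHx hΛhx using hrow
    exact ⟨Λ, fun i j => hΛ0 i j, funext fun i => (mul_apply_eq_vecMul Λ Hx i).trans (hΛHx i),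
      fun i => hΛhx i⟩
  · rintro ⟨Λ, hΛ0, hΛHx, hΛhx⟩ _ ⟨x, hxX, rfl⟩
    calc Hy *ᵥ (γ + Γ *ᵥ x) = Hy *ᵥ γ + Λ *ᵥ (Hx *ᵥ x) := by
          rw [mulVec_add, mulVec_mulVec, ← hΛHx, mulVec_mulVec]
      _ ≤ Hy *ᵥ γ + Λ *ᵥ hx := by
          gcongr
          exact fun i => dotProduct_le_dotProduct_of_nonneg_left hxX (hΛ0 i)
      _ ≤ hy := by simpa [le_sub_iff_add_le'] using hΛhx
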